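/- arXiv:1604.06610 — 8 statements merged into one kernel-verified Lean document; each statement's English description precedes it below -/
import Mathlib

section
/- Suppose constant Christoffel symbols on ℝ² satisfy ρ₁₁ = 0 and ρ₂₂ = 0 where ρ is indefinite (so ρ given by the standard formula has signature (1,1) after normalizing ρ₁₂ = ρ₂₁ = 1), and write Γ₁₁¹ = Γ₁₂² + α, Γ₂₂² = Γ₁₂¹ + β. If (α,β) ≠ (0,0), then ρ₁₂ = 0, i.e., ρ = 0. Consequently any Type A structure with ρ = antidiag(1,1) must satisfy Γ₁₁¹ = Γ₁₂² and Γ₂₂² = Γ₁₂¹. -/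
/-- `ρ₁₁` for constant Christoffel symbols on ℝ². -/
def rho11 (Γ111 Γ112 Γ121 Γ122 Γ221 Γ222 : ℝ) : ℝ :=
  Γ122 * (Γ111 - Γ122) + Γ112 * (Γ222 - Γ121)

/-- `ρ₁₂ = ρ₂₁` for constant Christoffel symbols on ℝ². -/
def rho12 (Γ111 Γ112 Γ121 Γ122 Γ221 Γ222 : ℝ) : ℝ :=
  Γ121 * Γ122 - Γ112 * Γ221

/-- `ρ₂₂` for constant Christoffel symbols on ℝ². -/
def rho22 (Γ111 Γ112 Γ121 Γ122 Γ221 Γ222 : ℝ) : ℝ :=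
  Γ221 * (Γ111 - Γ122) + Γ121 * (Γ222 - Γ121)

theorem stmt_3 (Γ111 Γ112 Γ121 Γ122 Γ221 Γ222 : ℝ)
    (h11 : rho11 Γ111 Γ112 Γ121 Γ122 Γ221 Γ222 = 0)
    (h22 : rho22 Γ111 Γ112 Γ121 Γ122 Γ221 Γ222 = 0) :
    ((Γ111 - Γ122, Γ222 - Γ121) ≠ (0, 0) →
      rho12 Γ111 Γ112 Γ121 Γ122 Γ221 Γ222 = 0) ∧
    (rho12 Γ111 Γ112 Γ121 Γ122 Γ221 Γ222 = 1 →
      Γ111 = Γ122 ∧ Γ222 = Γ121) := by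
  simp only [rho11, rho12, rho22] at *
  have hA : (Γ111 - Γ122) * (Γ121 * Γ122 - Γ112 * Γ221) = 0 := by
    linear_combination Γ121 * h11 - Γ112 * h22
  have hB : (Γ222 - Γ121) * (Γ121 * Γ122 - Γ112 * Γ221) = 0 := by
    linear_combination Γ122 * h22 - Γ221 * h11
  constructor
  · intro hne
    rcases mul_eq_zero.mp hA with ha | h
    · rcases mul_eq_zero.mp hB with hb | h
      · exact absurd (Prod.ext ha hb) hne
      · exact h
    · exact h
  · intro h1
    simp only [h1, mul_one] at hA hB
    constructor <;> linarith
end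

section
/- For Γ₊(x,y), the invariants ψ₃ and Ψ₃ are given by p₊(x,y) = 4x² + 1/x² + y² + 2 and P₊(x,y) = 4x⁴ + x²(y²+4) + y²/x² + 2(1+y²), where ψ₃ = ρ^{ij}ρ³_{ij} with ρ³_{ij} = Γ_{ik}^l Γ_{jl}^k, and Ψ₃ = det(ρ³)/det(ρ). -/
theorem stmt_4 (x y : ℝ) (hx : x ≠ 0) :
    -- Christoffel symbols of Γ₊(x,y): Γ₁₁¹ = x + 1/x, Γ₁₁² = 0, Γ₁₂¹ = 0,
    -- Γ₁₂² = x, Γ₂₂¹ = x, Γ₂₂² = y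
    let G : Fin 2 → Fin 2 → Fin 2 → ℝ :=
      ![![![x + 1/x, 0], ![0, x]], ![![0, x], ![x, y]]]
    -- the Ricci tensor of the constant-Christoffel connection
    let ρ : Matrix (Fin 2) (Fin 2) ℝ :=
      Matrix.of fun i j => ∑ l, ∑ m, (G i j m * G l m l - G l j m * G i m l)
    -- ρ³_{ij} = Γ_{ik}^l Γ_{jl}^k
    let ρ3 : Matrix (Fin 2) (Fin 2) ℝ :=
      Matrix.of fun i j => ∑ k, ∑ l, G i k l * G j l k
    -- ψ₃ = ρ^{ij} ρ³_{ij}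
    (∑ i, ∑ j, ρ⁻¹ i j * ρ3 i j) = 4*x^2 + 1/x^2 + y^2 + 2 ∧
    -- Ψ₃ = det(ρ³)/det(ρ)
    ρ3.det / ρ.det = 4*x^4 + x^2*(y^2 + 4) + y^2/x^2 + 2*(1 + y^2) := by
  intro G ρ ρ3
  have hρ : ρ = 1 := by
    ext i j
    fin_cases i <;> fin_cases j <;>
      simp [ρ, G, Fin.sum_univ_succ, Matrix.one_apply]
    all_goals try field_simp
    all_goals try ring
  constructor
  · rw [hρ, inv_one]
    simp [ρ3, G, Fin.sum_univ_succ, Matrix.one_apply]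
    field_simp
    ring
  · rw [hρ]
    simp [ρ3, G, Matrix.det_fin_two, Fin.sum_univ_succ]
    field_simp
    ring
end

section
/- Let x > 1 and set x₊ = 1/√(2x²−1), y₊ = −(1+2x²)√(x²−1)/(x√(2x²−1)). Then (x₊, y₊) lies on the Jacobi locus: 4x₊⁶ + x₊⁴y₊² + x₊²(y₊²−3) − 1 = 0, and moreover 0 < x₊ < 1. -/
theorem stmt_7 (x : ℝ) (hx : 1 < x) :
    let xp : ℝ := 1 / Real.sqrt (2*x^2 - 1)
    let yp : ℝ := -(1 + 2*x^2) * Real.sqrt (x^2 - 1) / (x * Real.sqrt (2*x^2 - 1))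
    4*xp^6 + xp^4*yp^2 + xp^2*(yp^2 - 3) - 1 = 0 ∧ 0 < xp ∧ xp < 1 := by
  intro xp yp
  have hx0 : (0:ℝ) < x := lt_trans one_pos hx
  have h2 : (0:ℝ) < 2*x^2 - 1 := by nlinarith
  have h1 : (0:ℝ) ≤ x^2 - 1 := by nlinarith
  set s := Real.sqrt (2*x^2 - 1) with hs
  set t := Real.sqrt (x^2 - 1) with ht
  have hs2 : s^2 = 2*x^2 - 1 := Real.sq_sqrt h2.le
  have ht2 : t^2 = x^2 - 1 := Real.sq_sqrt h1
  have hspos : 0 < s := Real.sqrt_pos.mpr h2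
  have hs1 : 1 < s := by nlinarith [hs2, hspos]
  have hsne := hspos.ne'
  have hxne := hx0.ne'
  have h2ne : (2*x^2 - 1) ≠ 0 := h2.ne'
  refine ⟨?_, ?_, ?_⟩
  · show 4*(1/s)^6 + (1/s)^4*(-(1 + 2*x^2) * t / (x * s))^2 + (1/s)^2*((-(1 + 2*x^2) * t / (x * s))^2 - 3) - 1 = 0
    have e1 : (1/s)^2 = 1/(2*x^2-1) := by rw [div_pow, one_pow, hs2]
    have e2 : (-(1 + 2*x^2) * t / (x * s))^2
        = (1+2*x^2)^2*(x^2-1)/(x^2*(2*x^2-1)) := by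
      rw [div_pow, mul_pow, mul_pow, hs2, ht2, neg_pow]; ring
    have e6 : (1/s)^6 = ((1/s)^2)^3 := by ring
    have e4 : (1/s)^4 = ((1/s)^2)^2 := by ring
    rw [e6, e4, e1, e2]
    field_simp
    ring
  · positivity
  · rw [div_lt_one hspos]; exact hs1
end

section
/- Along the curve γ(x) = Ω₊(x,0) = (2 + x^{-2} + 4x², 4x^{-2}(1−x²)³) for x ≥ 1: the first coordinate is monotonically increasing, the second coordinate is monotonically decreasing, the slope dγ₂/dγ₁ = −4(x²−1)²/(2x²−1) is monotonically decreasing in x, the ray-slope −(x²−1)²/x² is monotonically decreasing in x, and for every x > 1 the ray-slope is strictly greater than the curve slope: −(x²−1)²/x² > −4(x²−1)²/(2x²−1). -/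
theorem stmt_11 :
    StrictMonoOn (fun x : ℝ => 2 + 1/x^2 + 4*x^2) (Set.Ici 1) ∧
    StrictAntiOn (fun x : ℝ => 4/x^2*(1 - x^2)^3) (Set.Ici 1) ∧
    StrictAntiOn (fun x : ℝ => -4*(x^2 - 1)^2/(2*x^2 - 1)) (Set.Ioi 1) ∧
    StrictAntiOn (fun x : ℝ => -(x^2 - 1)^2/x^2) (Set.Ioi 1) ∧
    (∀ x : ℝ, 1 < x → -(x^2 - 1)^2/x^2 > -4*(x^2 - 1)^2/(2*x^2 - 1)) := by
  refine ⟨?_, ?_, ?_, ?_, ?_⟩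
  · intro a ha b hb hab
    simp only [Set.mem_Ici] at ha hb
    have ha0 : (0:ℝ) < a := by linarith
    have hb0 : (0:ℝ) < b := by linarith
    have hab2 : a^2 < b^2 := by nlinarith
    have ha1 : (1:ℝ) ≤ a^2 := by nlinarith
    have hb1 : (1:ℝ) ≤ b^2 := by nlinarith
    have h1 : (1:ℝ)/a^2 - 1/b^2 = (b^2 - a^2)/(a^2*b^2) := by
      field_simp
    have h2 : (b^2 - a^2)/(a^2*b^2) ≤ b^2 - a^2 :=
      div_le_self (by linarith) (by nlinarith)
    simp only
    linarith
  · intro a ha b hb hab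
    simp only [Set.mem_Ici] at ha hb
    have hb' : (1:ℝ) < b := lt_of_le_of_lt ha hab
    have ha0 : (0:ℝ) < a^2 := by positivity
    have hb0 : (0:ℝ) < b^2 := by positivity
    have hu : (0:ℝ) ≤ a^2 - 1 := by nlinarith
    have hv : (0:ℝ) < b^2 - 1 := by nlinarith
    have hd : (0:ℝ) < b^2 - a^2 := by nlinarith
    have hsum : (0:ℝ) < a^2 + b^2 - 2 := by nlinarith
    have hq : (0:ℝ) < (b^2-1)^2 + (a^2-1)*(b^2-1) + (a^2-1)^2 := by
      nlinarith [mul_nonneg hu hv.le, sq_nonneg (a^2-1)]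
    simp only
    have e : ∀ x : ℝ, x ≠ 0 → 4/x^2*(1 - x^2)^3 = 4*(1 - x^2)^3/x^2 := by
      intro x hx; field_simp
    rw [e a (by nlinarith), e b (by nlinarith), div_lt_div_iff₀ hb0 ha0]
    nlinarith [mul_nonneg (mul_nonneg hu hv.le) (mul_pos hd hsum).le, mul_pos hd hq]
  · intro a ha b hb hab
    simp only [Set.mem_Ioi] at ha hb
    have ha0 : (0:ℝ) < 2*a^2 - 1 := by nlinarith
    have hb0 : (0:ℝ) < 2*b^2 - 1 := by nlinarith
    have hu : (0:ℝ) < a^2 - 1 := by nlinarith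
    have hv : (0:ℝ) < b^2 - 1 := by nlinarith
    have hd : (0:ℝ) < b^2 - a^2 := by nlinarith
    have hsum : (0:ℝ) < a^2 + b^2 - 2 := by nlinarith
    simp only
    rw [div_lt_div_iff₀ hb0 ha0]
    nlinarith [mul_pos (mul_pos hu hv) hd, mul_pos hd hsum]
  · intro a ha b hb hab
    simp only [Set.mem_Ioi] at ha hb
    have ha0 : (0:ℝ) < a^2 := by positivity
    have hb0 : (0:ℝ) < b^2 := by positivity
    have hu : (0:ℝ) < a^2 - 1 := by nlinarith
    have hv : (0:ℝ) < b^2 - 1 := by nlinarith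
    have hd : (0:ℝ) < b^2 - a^2 := by nlinarith
    have hsum : (0:ℝ) < a^2 + b^2 - 2 := by nlinarith
    simp only
    rw [div_lt_div_iff₀ hb0 ha0]
    nlinarith [mul_pos (mul_pos hu hv) hd, mul_pos hd hsum]
  · intro x hx
    have h1 : (0:ℝ) < x^2 := by positivity
    have h2 : (0:ℝ) < 2*x^2 - 1 := by nlinarith
    have h3 : (0:ℝ) < (x^2-1)^2 := pow_pos (by nlinarith) 2
    rw [gt_iff_lt, div_lt_div_iff₀ h2 h1]
    nlinarith [mul_pos h3 (show (0:ℝ) < 2*x^2 + 1 by nlinarith)]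
end

section
/- Consider an indefinite Type A structure normalized so that ρ = antidiag(1,1), with Γ₁₁¹ = Γ₁₂² = x, Γ₁₂¹ = Γ₂₂² = y, and Γ₁₁²Γ₂₂¹ = xy − 1. If xy > 1 and Γ₁₁² = Γ₂₂¹ = √(xy−1), then with s = xy > 1 and t satisfying x = √s·t, y = √s/t (t ≠ 0), the invariants satisfy ψ₃ = −2 + 8s and Ψ₃ = 1 − 4s + 8s² − 4s^{3/2}√(s−1)·(t³ + t^{-3}). -/
/-!
With Γ₁₁² = Γ₂₂¹ = q and q² = xy − 1, a direct computation gives ρ = antidiag(1,1) and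
ρ³ = [[2x² + 2qy, 3xy + q²], [3xy + q², 2y² + 2qx]]. Hence ψ₃ = 2(3xy + q²) = 8xy − 2 and
Ψ₃ = −det ρ³ = 1 − 4xy + 8x²y² − 4q(x³ + y³). Under x = √s t, y = √s / t one has xy = s and
x³ + y³ = (√s)³ (t³ + t⁻³).
-/

open Matrix

namespace TypeA

/-- `christoffel x y q i j m` is `Γ_{ij}^m` of the family `Γ_{0,1}`, with `Γ₁₁² = Γ₂₂¹ = q`. -/
def christoffel {R : Type*} (x y q : R) : Fin 2 → Fin 2 → Fin 2 → R :=
  ![![![x, q], ![y, x]], ![![y, x], ![q, y]]]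

variable {ι R : Type*} [Fintype ι] [CommRing R]

def ricci (Γ : ι → ι → ι → R) : Matrix ι ι R :=
  Matrix.of fun i j => ∑ l, ∑ m, (Γ i j m * Γ l m l - Γ l j m * Γ i m l)

def ricciCube (Γ : ι → ι → ι → R) : Matrix ι ι R :=
  Matrix.of fun i j => ∑ k, ∑ l, Γ i k l * Γ j l k

variable {x y q : R}

theorem ricci_christoffel (hq : q * q = x * y - 1) :
    ricci (christoffel x y q) = !![0, 1; 1, 0] := by
  ext i j
  fin_cases i <;> fin_cases j <;> simp [ricci, christoffel, Fin.sum_univ_two] <;>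
    first | ring1 | linear_combination -hq

theorem ricciCube_christoffel :
    ricciCube (christoffel x y q) =
      !![2 * x ^ 2 + 2 * q * y, 3 * x * y + q ^ 2; 3 * x * y + q ^ 2, 2 * y ^ 2 + 2 * q * x] := by
  ext i j
  fin_cases i <;> fin_cases j <;> simp [ricciCube, christoffel, Fin.sum_univ_two] <;> ring

theorem inv_antidiag_one : (!![0, 1; 1, 0] : Matrix (Fin 2) (Fin 2) R)⁻¹ = !![0, 1; 1, 0] := by
  refine inv_eq_right_inv ?_
  rw [mul_fin_two, one_fin_two]
  norm_num

theorem psi3_christoffel (hq : q * q = x * y - 1) :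
    ∑ i, ∑ j, (ricci (christoffel x y q))⁻¹ i j * ricciCube (christoffel x y q) i j =
      -2 + 8 * (x * y) := by
  rw [ricci_christoffel hq, inv_antidiag_one, ricciCube_christoffel]
  simp only [of_apply, cons_val', cons_val_fin_one, Fin.sum_univ_two, cons_val_zero, cons_val_one,
    zero_mul, one_mul, zero_add, add_zero]
  linear_combination 2 * hq

theorem Psi3_christoffel {K : Type*} [Field K] {x y q : K} (hq : q * q = x * y - 1) :
    (ricciCube (christoffel x y q)).det / (ricci (christoffel x y q)).det =
      1 - 4 * (x * y) + 8 * (x * y) ^ 2 - 4 * (x ^ 3 + y ^ 3) * q := by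
  rw [ricci_christoffel hq, ricciCube_christoffel, det_fin_two_of, det_fin_two_of]
  linear_combination (q * q + 3 * (x * y) - 1) * hq

end TypeA

open TypeA

theorem stmt_12 (s t x y : ℝ) (hs : 1 < s) (ht : t ≠ 0)
    (hxt : x = Real.sqrt s * t) (hyt : y = Real.sqrt s / t) :
    -- Christoffel symbols Γ₁₁¹ = Γ₁₂² = x, Γ₁₂¹ = Γ₂₂² = y, Γ₁₁² = Γ₂₂¹ = √(xy−1)
    let G : Fin 2 → Fin 2 → Fin 2 → ℝ :=
      ![![![x, Real.sqrt (x*y - 1)], ![y, x]],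
        ![![y, x], ![Real.sqrt (x*y - 1), y]]]
    -- the Ricci tensor (equal to antidiag(1,1))
    let ρ : Matrix (Fin 2) (Fin 2) ℝ :=
      Matrix.of fun i j => ∑ l, ∑ m, (G i j m * G l m l - G l j m * G i m l)
    let ρ3 : Matrix (Fin 2) (Fin 2) ℝ :=
      Matrix.of fun i j => ∑ k, ∑ l, G i k l * G j l k
    (∑ i, ∑ j, ρ⁻¹ i j * ρ3 i j) = -2 + 8*s ∧
    ρ3.det / ρ.det =
      1 - 4*s + 8*s^2 - 4*(Real.sqrt s)^3 * Real.sqrt (s - 1) * (t^3 + (t^3)⁻¹) := by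
  have hss : Real.sqrt s * Real.sqrt s = s := Real.mul_self_sqrt (by linarith)
  have hxy : x * y = s := by
    rw [hxt, hyt]; field_simp; linear_combination hss
  have hcubes : x ^ 3 + y ^ 3 = Real.sqrt s ^ 3 * (t ^ 3 + (t ^ 3)⁻¹) := by
    rw [hxt, hyt]; field_simp
  have hq : Real.sqrt (x * y - 1) * Real.sqrt (x * y - 1) = x * y - 1 :=
    Real.mul_self_sqrt (by linarith)
  refine ⟨?_, ?_⟩
  · change ∑ i, ∑ j, (ricci (christoffel x y _))⁻¹ i j * ricciCube (christoffel x y _) i j = _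
    rw [psi3_christoffel hq, hxy]
  · change (ricciCube (christoffel x y _)).det / (ricci (christoffel x y _)).det = _
    rw [Psi3_christoffel hq, hcubes, hxy]
    ring
end

section
/- Let σ₊(u) = (2 + u^{-2} + 4u², 2 + 4u² + 4u⁴) for u > 0 and σ_{0,1}(v) = (−2 + 8v², 1 − 4v² + 8v⁴ − 8v³√(v²−1)) for |v| ≥ 1. If 0 < u ≤ 1/√2 and v = 2^{-3/2}(2u + u^{-1}), then v ≥ 1, √(v²−1) = 2^{-3/2}(u^{-1} − 2u), and σ_{0,1}(v) = σ₊(u). -/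
theorem stmt_14 (u : ℝ) (hu0 : 0 < u) (hu : u ≤ 1 / Real.sqrt 2) :
    let v : ℝ := (1 / (2 * Real.sqrt 2)) * (2*u + 1/u)
    1 ≤ v ∧
    Real.sqrt (v^2 - 1) = (1 / (2 * Real.sqrt 2)) * (1/u - 2*u) ∧
    ((-2 + 8*v^2, 1 - 4*v^2 + 8*v^4 - 8*v^3 * Real.sqrt (v^2 - 1)) : ℝ × ℝ) =
      (2 + 1/u^2 + 4*u^2, 2 + 4*u^2 + 4*u^4) := by
  intro v
  have ha0 : (0:ℝ) < Real.sqrt 2 := Real.sqrt_pos.mpr (by norm_num)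
  have ha : Real.sqrt 2 ^ 2 = 2 := Real.sq_sqrt (by norm_num)
  have h8 : (2 * Real.sqrt 2) ^ 2 = 8 := by rw [mul_pow, ha]; norm_num
  have hs4 : (2 * Real.sqrt 2) ^ 4 = 64 := by
    rw [show (4:ℕ) = 2*2 from rfl, pow_mul, h8]; norm_num
  have hu2 : 2 * u^2 ≤ 1 := by
    have h := mul_le_mul_of_nonneg_left hu (le_of_lt ha0)
    rw [mul_one_div, div_self (ne_of_gt ha0)] at h
    nlinarith [mul_le_mul h h (by positivity : (0:ℝ) ≤ Real.sqrt 2 * u) (by norm_num : (0:ℝ) ≤ 1)]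
  have hu1 : 2 * u ≤ 1 / u := by
    rw [le_div_iff₀ hu0]; nlinarith
  have hw2 : v ^ 2 = (2*u + 1/u)^2 / 8 := by
    show ((1 / (2 * Real.sqrt 2)) * (2*u + 1/u)) ^ 2 = _
    calc ((1 / (2 * Real.sqrt 2)) * (2*u + 1/u)) ^ 2
        = (1 / (2 * Real.sqrt 2)) ^ 2 * (2*u + 1/u) ^ 2 := by ring
      _ = (2*u + 1/u)^2 / 8 := by rw [div_pow, one_pow, h8]; ring
  have hw4 : v ^ 4 = (2*u + 1/u)^4 / 64 := by
    show ((1 / (2 * Real.sqrt 2)) * (2*u + 1/u)) ^ 4 = _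
    calc ((1 / (2 * Real.sqrt 2)) * (2*u + 1/u)) ^ 4
        = (1 / (2 * Real.sqrt 2)) ^ 4 * (2*u + 1/u) ^ 4 := by ring
      _ = (2*u + 1/u)^4 / 64 := by rw [div_pow, one_pow, hs4]; ring
  have hv2 : v ^ 2 - 1 = ((1 / (2 * Real.sqrt 2)) * (1/u - 2*u)) ^ 2 := by
    rw [hw2]
    calc (2*u + 1/u)^2 / 8 - 1
        = (1/u - 2*u)^2 / 8 := by field_simp; ring
      _ = (1 / (2 * Real.sqrt 2)) ^ 2 * (1/u - 2*u)^2 := by rw [div_pow, one_pow, h8]; ring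
      _ = _ := by ring
  have hnn : (0:ℝ) ≤ (1 / (2 * Real.sqrt 2)) * (1/u - 2*u) :=
    mul_nonneg (by positivity) (by linarith)
  have hsq : Real.sqrt (v^2 - 1) = (1 / (2 * Real.sqrt 2)) * (1/u - 2*u) := by
    rw [hv2, Real.sqrt_sq hnn]
  have hv1 : 1 ≤ v := by
    have hvpos : 0 < v := by
      show 0 < (1 / (2 * Real.sqrt 2)) * (2*u + 1/u); positivity
    nlinarith [hv2, sq_nonneg ((1 / (2 * Real.sqrt 2)) * (1/u - 2*u))]
  refine ⟨hv1, hsq, ?_⟩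
  have hw3 : 8 * v ^ 3 * (1 / (2 * Real.sqrt 2) * (1/u - 2*u))
      = (2*u + 1/u)^3 * (1/u - 2*u) / 8 := by
    show 8 * ((1 / (2 * Real.sqrt 2)) * (2*u + 1/u)) ^ 3 * _ = _
    calc 8 * ((1 / (2 * Real.sqrt 2)) * (2*u + 1/u)) ^ 3 * (1 / (2 * Real.sqrt 2) * (1/u - 2*u))
        = (1 / (2 * Real.sqrt 2)) ^ 4 * (8 * (2*u + 1/u)^3 * (1/u - 2*u)) := by ring
      _ = _ := by rw [div_pow, one_pow, hs4]; ring
  rw [hsq]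
  refine Prod.ext ?_ ?_ <;> simp only
  · rw [hw2]; field_simp; ring
  · rw [hw3, hw2, hw4]; field_simp; ring
end

section
/- Let σ₋(u) = (2 − 4u² − u^{-2}, 4u⁴ − 4u² + 2) for u > 0 and σ_{0,2}(v) = (−2 − 8v², 1 + 4v² + 8v⁴ + 8v³√(1+v²)) for v ∈ ℝ. If 0 < u < 1/√2 and v = 2^{-3/2}(2u − u^{-1}) (so v < 0), then √(v²+1) = 2^{-3/2}(2u + u^{-1}) and σ_{0,2}(v) = σ₋(u). -/
theorem stmt_15 (u : ℝ) (hu0 : 0 < u) (hu : u < 1 / Real.sqrt 2) :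
    let v : ℝ := (1 / (2 * Real.sqrt 2)) * (2*u - 1/u)
    v < 0 ∧
    Real.sqrt (v^2 + 1) = (1 / (2 * Real.sqrt 2)) * (2*u + 1/u) ∧
    ((-2 - 8*v^2, 1 + 4*v^2 + 8*v^4 + 8*v^3 * Real.sqrt (1 + v^2)) : ℝ × ℝ) =
      (2 - 4*u^2 - 1/u^2, 4*u^4 - 4*u^2 + 2) := by
  intro v
  have hu' : u ≠ 0 := ne_of_gt hu0
  have hs : (0:ℝ) < Real.sqrt 2 := Real.sqrt_pos.mpr (by norm_num)
  have hs2 : Real.sqrt 2 ^ 2 = 2 := Real.sq_sqrt (by norm_num)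
  have hs' : Real.sqrt 2 ≠ 0 := ne_of_gt hs
  have hu2 : u ^ 2 < 1 / 2 := by
    have h1 : u * Real.sqrt 2 < 1 := by
      rw [lt_div_iff₀ hs] at hu; linarith
    nlinarith [mul_pos hu0 hs]
  have hneg : 2*u - 1/u < 0 := by
    have h : 2*u - 1/u = (2*u^2 - 1)/u := by field_simp
    rw [h]; exact div_neg_of_neg_of_pos (by nlinarith) hu0
  have hv0 : v < 0 := mul_neg_of_pos_of_neg (by positivity) hneg
  have hc : (1 / (2 * Real.sqrt 2) : ℝ)^2 = 1/8 := by
    rw [div_pow, mul_pow, hs2]; norm_num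
  have hv2 : v ^ 2 = (2*u - 1/u)^2 / 8 := by
    show ((1 / (2 * Real.sqrt 2)) * (2*u - 1/u))^2 = _
    rw [mul_pow, hc]; ring
  have hveq : v ^ 2 + 1 = ((1 / (2 * Real.sqrt 2)) * (2*u + 1/u)) ^ 2 := by
    rw [hv2, mul_pow, hc]; field_simp; ring
  have hsq : Real.sqrt (v^2 + 1) = (1 / (2 * Real.sqrt 2)) * (2*u + 1/u) := by
    rw [hveq, Real.sqrt_sq (by positivity)]
  refine ⟨hv0, hsq, ?_⟩
  have hsq' : Real.sqrt (1 + v^2) = (1 / (2 * Real.sqrt 2)) * (2*u + 1/u) := by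
    rw [add_comm]; exact hsq
  have hvs : v * Real.sqrt (1 + v^2) = (4*u^2 - 1/u^2)/8 := by
    rw [hsq']
    show ((1 / (2 * Real.sqrt 2)) * (2*u - 1/u)) * ((1 / (2 * Real.sqrt 2)) * (2*u + 1/u)) = _
    have : ((1 / (2 * Real.sqrt 2)) * (2*u - 1/u)) * ((1 / (2 * Real.sqrt 2)) * (2*u + 1/u))
        = (1 / (2 * Real.sqrt 2))^2 * ((2*u - 1/u) * (2*u + 1/u)) := by ring
    rw [this, hc]; field_simp; ring
  refine Prod.ext ?_ ?_ <;> simp only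
  · rw [hv2]; field_simp; ring
  · have e : (1:ℝ) + 4*v^2 + 8*v^4 + 8*v^3 * Real.sqrt (1 + v^2)
        = 1 + 4*v^2 + 8*(v^2)^2 + 8*(v^2*(v * Real.sqrt (1 + v^2))) := by ring
    rw [e, hvs, hv2]; field_simp; ring
end

section
/- Let Γ_csp be the Type A structure Γ₁₁¹ = −1/√2, Γ₁₁² = 0, Γ₁₂¹ = 0, Γ₁₂² = 1/√2, Γ₂₂¹ = 1/√2, Γ₂₂² = 0. Then the rotation T_θ through angle θ = 2π/3 satisfies T_θ*Γ_csp = Γ_csp, where (T*Γ)_{ij}^k = Σ ã_i^α ã_j^β a^k_γ Γ_{αβ}^γ with (a_i^j) the rotation matrix and (ã) its inverse. -/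
set_option maxHeartbeats 1000000

theorem stmt_17 :
    let θ : ℝ := 2 * Real.pi / 3
    -- the rotation matrix a_i^j of T_θ
    let A : Matrix (Fin 2) (Fin 2) ℝ :=
      !![Real.cos θ, -Real.sin θ; Real.sin θ, Real.cos θ]
    -- the cusp-point Christoffel symbols Γ_csp
    let G : Fin 2 → Fin 2 → Fin 2 → ℝ :=
      ![![![-(1/Real.sqrt 2), 0], ![0, 1/Real.sqrt 2]],
        ![![0, 1/Real.sqrt 2], ![1/Real.sqrt 2, 0]]]
    -- (T_θ* Γ)_{ij}{}^k = ∑ ã_i^α ã_j^β a^k_γ Γ_{αβ}{}^γ = Γ_{ij}{}^k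
    ∀ i j k : Fin 2,
      (∑ α, ∑ β, ∑ γ, A⁻¹ α i * A⁻¹ β j * A k γ * G α β γ) = G i j k := by
  intro θ A G i j k
  have hθ : θ = Real.pi - Real.pi / 3 := by unfold θ; ring
  have hc : Real.cos θ = -(1/2) := by
    rw [hθ, Real.cos_pi_sub, Real.cos_pi_div_three]
  have hs : Real.sin θ = Real.sqrt 3 / 2 := by
    rw [hθ, Real.sin_pi_sub, Real.sin_pi_div_three]
  have h3 : Real.sqrt 3 * Real.sqrt 3 = 3 := Real.mul_self_sqrt (by norm_num)
  have hAinv : A⁻¹ = !![-(1/2), Real.sqrt 3 / 2; -(Real.sqrt 3 / 2), -(1/2)] := by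
    apply Matrix.inv_eq_right_inv
    unfold A
    rw [hc, hs]
    ext a b
    fin_cases a <;> fin_cases b <;>
      simp [Matrix.mul_apply, Fin.sum_univ_succ] <;> nlinarith [h3]
  rw [hAinv]
  unfold A G
  rw [hc, hs]
  have h2sq : Real.sqrt 3 ^ 2 = 3 := Real.sq_sqrt (by norm_num)
  have h3cube : Real.sqrt 3 ^ 3 = 3 * Real.sqrt 3 := by
    rw [pow_succ, h2sq]
  fin_cases i <;> fin_cases j <;> fin_cases k <;>
    simp [Fin.sum_univ_succ] <;> ring_nf <;> (try (simp only [h2sq, h3cube]; ring))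
end
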